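/- The Lie algebra T*su(2) (the T*-extension of su(2)) has no Lie subalgebra of dimension 5. -/

import Mathlib

section TStarExtension

variable {L : Type*} [LieRing L] [LieAlgebra ℝ L]

/-- The Lie ring structure of the `T*`-extension `T*g = g ⊕ g*` of a real Lie algebra `g`:
`[u + α, v + β] = [u,v] + ad*_u β − ad*_v α`, where `(ad*_u α)(v) = −α([u,v])`.
(Here `⁅u, β⁆ = ad*_u β` is the coadjoint action of Mathlib's
`Module.Dual.instLieRingModule`, for which `⁅u, β⁆ v = −β ⁅u, v⁆`.) -/
instance tstarLieRing : LieRing (L × Module.Dual ℝ L) where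
  bracket x y := (⁅x.1, y.1⁆, ⁅x.1, y.2⁆ - ⁅y.1, x.2⁆)
  add_lie x y z := by
    refine Prod.ext ?_ ?_
    · show ⁅(x + y).1, z.1⁆ = (⁅x.1, z.1⁆ + ⁅y.1, z.1⁆ : L)
      simp [add_lie]
    · show ⁅(x + y).1, z.2⁆ - ⁅z.1, (x + y).2⁆ =
        (⁅x.1, z.2⁆ - ⁅z.1, x.2⁆) + (⁅y.1, z.2⁆ - ⁅z.1, y.2⁆)
      simp only [Prod.fst_add, Prod.snd_add, add_lie, lie_add]
      abel
  lie_add x y z := by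
    refine Prod.ext ?_ ?_
    · show ⁅x.1, (y + z).1⁆ = (⁅x.1, y.1⁆ + ⁅x.1, z.1⁆ : L)
      simp [lie_add]
    · show ⁅x.1, (y + z).2⁆ - ⁅(y + z).1, x.2⁆ =
        (⁅x.1, y.2⁆ - ⁅y.1, x.2⁆) + (⁅x.1, z.2⁆ - ⁅z.1, x.2⁆)
      simp only [Prod.fst_add, Prod.snd_add, add_lie, lie_add]
      abel
  lie_self x := by
    refine Prod.ext ?_ ?_
    · show ⁅x.1, x.1⁆ = (0 : L)
      simp
    · show ⁅x.1, x.2⁆ - ⁅x.1, x.2⁆ = (0 : Module.Dual ℝ L)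
      simp
  leibniz_lie x y z := by
    refine Prod.ext ?_ ?_
    · show ⁅x.1, ⁅y.1, z.1⁆⁆ = (⁅⁅x.1, y.1⁆, z.1⁆ + ⁅y.1, ⁅x.1, z.1⁆⁆ : L)
      exact leibniz_lie _ _ _
    · show ⁅x.1, ⁅y.1, z.2⁆ - ⁅z.1, y.2⁆⁆ - ⁅⁅y.1, z.1⁆, x.2⁆ =
        (⁅⁅x.1, y.1⁆, z.2⁆ - ⁅z.1, ⁅x.1, y.2⁆ - ⁅y.1, x.2⁆⁆) +
        (⁅y.1, ⁅x.1, z.2⁆ - ⁅z.1, x.2⁆⁆ - ⁅⁅x.1, z.1⁆, y.2⁆)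
      simp only [lie_lie, lie_sub]
      abel

/-- The `T*`-extension is a Lie algebra over `ℝ`. -/
noncomputable instance tstarLieAlgebra : LieAlgebra ℝ (L × Module.Dual ℝ L) where
  lie_smul t x y := by
    refine Prod.ext ?_ ?_
    · show ⁅x.1, (t • y).1⁆ = t • ⁅x.1, y.1⁆
      rw [Prod.smul_fst, lie_smul]
    · show ⁅x.1, (t • y).2⁆ - ⁅(t • y).1, x.2⁆ = t • (⁅x.1, y.2⁆ - ⁅y.1, x.2⁆)
      ext m
      simp only [Prod.smul_fst, Prod.smul_snd, LinearMap.sub_apply, LinearMap.smul_apply,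
        Module.Dual.lie_apply, smul_lie, map_smul, smul_eq_mul, smul_sub]
      ring

/-- The canonical invariant bilinear form of the `T*`-extension:
`⟨u + α, v + β⟩ = α(v) + β(u)`. -/
def tstarForm (x y : L × Module.Dual ℝ L) : ℝ := x.2 y.1 + y.2 x.1

end TStarExtension

/-!
A 5-dimensional subspace of `T*su(2)` is the kernel of a functional `(u, α) ↦ a u + α f`.
If it is a subalgebra, bracketing `(0, α)`, for `α f = 0`, against its elements shows that the
line `ℝ f` is stable under every `ad v`, and if `f = 0`, `ker a` is a subalgebra of `su(2)`.
Both are impossible in a Lie algebra with trivial center that carries an anisotropic invariant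
form `B` (for `su(2)`, the dot product of coordinates, invariant because the bracket is the cross
product): if `[v, f] = c f` then `B [v,f] [v,f] = c B v [f,f] = 0`; and if `ker a` is a subalgebra,
write `a = B n`, then `B [n,x] [n,x] = B n [x,[n,x]] = 0` for `x ∈ ker a`, so `n` is central.
-/

open Module Matrix

theorem Module.Dual.exists_apply_prod_dual_eq {K V : Type*} [Field K] [AddCommGroup V]
    [Module K V] [FiniteDimensional K V] (φ : Dual K (V × Dual K V)) :
    ∃ (a : Dual K V) (f : V), ∀ u α, φ (u, α) = a u + α f := by
  refine ⟨φ ∘ₗ LinearMap.inl K _ _, (evalEquiv K V).symm (φ ∘ₗ LinearMap.inr K _ _),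
    fun u α => ?_⟩
  rw [apply_evalEquiv_symm_apply, LinearMap.comp_apply, LinearMap.comp_apply, ← map_add]
  simp

theorem Submodule.exists_dual_ne_zero_forall_mem_iff {K V : Type*} [Field K] [AddCommGroup V]
    [Module K V] [FiniteDimensional K V] (p : Submodule K V)
    (hp : finrank K p + 1 = finrank K V) :
    ∃ φ : Dual K V, φ ≠ 0 ∧ ∀ x, x ∈ p ↔ φ x = 0 := by
  have hlt : p < ⊤ := by
    refine lt_top_iff_ne_top.2 fun h => ?_
    rw [h, finrank_top] at hp
    omega
  obtain ⟨φ, hφ, hmap⟩ := exists_dual_map_eq_bot_of_lt_top hlt inferInstance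
  have hle : p ≤ LinearMap.ker φ := fun x hx => by
    simpa [hmap] using Submodule.mem_map_of_mem (f := φ) hx
  have hker := Submodule.eq_of_le_of_finrank_eq hle
    (by have := Module.Dual.finrank_ker_add_one_of_ne_zero hφ; omega)
  exact ⟨φ, hφ, fun x => by rw [hker, LinearMap.mem_ker]⟩

section TStar

variable {L : Type*} [LieRing L] [LieAlgebra ℝ L] {H : LieSubalgebra ℝ (L × Dual ℝ L)}
  {a : Dual ℝ L} {f : L}

theorem lie_mem_span_singleton_of_tstar_mem_iff (hH : ∀ u α, (u, α) ∈ H ↔ a u + α f = 0)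
    (v : L) : ⁅v, f⁆ ∈ ℝ ∙ f := by
  rcases eq_or_ne f 0 with rfl | hf
  · simp
  by_contra hvf
  obtain ⟨α, hα, hαf⟩ := Submodule.exists_dual_map_eq_bot_of_notMem hvf inferInstance
  have hαf : α f = 0 := by
    simpa [hαf] using Submodule.mem_map_of_mem (f := α) (Submodule.mem_span_singleton_self f)
  obtain ⟨δ, hδ⟩ := Projective.exists_dual_eq_one ℝ hf
  have hx : ((0 : L), α) ∈ H := (hH _ _).2 (by simp [hαf])
  have hy : (v, -a v • δ) ∈ H := (hH _ _).2 (by simp [hδ])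
  have hxy := (hH _ _).1 (H.lie_mem hx hy)
  simp only [zero_lie, map_zero, zero_sub, LinearMap.neg_apply, Dual.lie_apply, neg_neg,
    zero_add] at hxy
  exact hα hxy

theorem map_lie_eq_zero_of_tstar_mem_iff (hH : ∀ u α, (u, α) ∈ H ↔ a u + α f = 0) (hf : f = 0)
    {u v : L} (hu : a u = 0) (hv : a v = 0) : a ⁅u, v⁆ = 0 := by
  subst hf
  have hx : (u, (0 : Dual ℝ L)) ∈ H := (hH _ _).2 (by simp [hu])
  have hy : (v, (0 : Dual ℝ L)) ∈ H := (hH _ _).2 (by simp [hv])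
  have hxy := (hH _ _).1 (H.lie_mem hx hy)
  simpa only [lie_zero, sub_self, LinearMap.zero_apply, add_zero] using hxy

end TStar

section InvariantForm

variable {K L : Type*} [Field K] [LieRing L] [LieAlgebra K L] {B : L →ₗ[K] L →ₗ[K] K}

theorem eq_zero_of_forall_lie_mem_span_singleton (hinv : ∀ x y z : L, B ⁅x, y⁆ z = B x ⁅y, z⁆)
    (hB : ∀ x, B x x = 0 → x = 0) (hZ : LieAlgebra.center K L = ⊥) {f : L}
    (hf : ∀ v : L, ⁅v, f⁆ ∈ K ∙ f) : f = 0 := by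
  have hcentral : f ∈ LieAlgebra.center K L := by
    refine (LieModule.mem_maxTrivSubmodule K L L f).2 fun v => hB _ ?_
    obtain ⟨c, hc⟩ := Submodule.mem_span_singleton.1 (hf v)
    calc B ⁅v, f⁆ ⁅v, f⁆ = c * B ⁅v, f⁆ f := by rw [← hc, map_smul, smul_eq_mul]
      _ = 0 := by rw [hinv, lie_self, map_zero, mul_zero]
  simpa [hZ] using hcentral

theorem eq_zero_of_forall_map_lie_eq_zero [FiniteDimensional K L]
    (hinv : ∀ x y z : L, B ⁅x, y⁆ z = B x ⁅y, z⁆) (hB : ∀ x, B x x = 0 → x = 0)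
    (hZ : LieAlgebra.center K L = ⊥) (a : Dual K L)
    (ha : ∀ u v, a u = 0 → a v = 0 → a ⁅u, v⁆ = 0) : a = 0 := by
  have hinj : Function.Injective B :=
    (injective_iff_map_eq_zero B).2 fun n hn => hB n (by rw [hn, LinearMap.zero_apply])
  obtain ⟨n, rfl⟩ := (LinearMap.injective_iff_surjective_of_finrank_eq_finrank
    Subspace.dual_finrank_eq.symm).1 hinj a
  have hperp : ∀ x, B n x = 0 → ⁅n, x⁆ = 0 := fun x hx => by
    have hnx : B n ⁅n, x⁆ = 0 := by rw [← hinv, lie_self, map_zero, LinearMap.zero_apply]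
    exact hB _ (by rw [hinv, ha x _ hx hnx])
  suffices n = 0 by rw [this, map_zero]
  rcases eq_or_ne (B n n) 0 with hnn | hnn
  · exact hB n hnn
  have hcentral : n ∈ LieAlgebra.center K L := by
    refine (LieModule.mem_maxTrivSubmodule K L L n).2 fun v => ?_
    have hv : B n (v - (B n v / B n n) • n) = 0 := by
      rw [map_sub, map_smul, smul_eq_mul, div_mul_cancel₀ _ hnn, sub_self]
    calc ⁅v, n⁆ = -⁅n, v - (B n v / B n n) • n⁆ := by
          rw [lie_sub, lie_smul, lie_self, smul_zero, sub_zero, ← lie_skew]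
      _ = 0 := by rw [hperp _ hv, neg_zero]
  simpa [hZ] using hcentral

end InvariantForm

section Su2

variable {L : Type*} [LieRing L] [LieAlgebra ℝ L] (b : Basis (Fin 3) ℝ L)

theorem Module.Basis.equivFun_lie_eq_cross
    (h12 : ⁅b 0, b 1⁆ = b 2) (h23 : ⁅b 1, b 2⁆ = b 0) (h31 : ⁅b 2, b 0⁆ = b 1) (x y : L) :
    b.equivFun ⁅x, y⁆ = b.equivFun x ⨯₃ b.equivFun y := by
  have h10 : ⁅b 1, b 0⁆ = -b 2 := by rw [← lie_skew, h12]
  have h21 : ⁅b 2, b 1⁆ = -b 0 := by rw [← lie_skew, h23]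
  have h02 : ⁅b 0, b 2⁆ = -b 1 := by rw [← lie_skew, h31]
  rw [← b.sum_repr x, ← b.sum_repr y]
  simp only [Fin.sum_univ_three, lie_add, add_lie, lie_smul, smul_lie, lie_self, h12, h23, h31,
    h10, h21, h02]
  ext i
  fin_cases i <;> simp [cross_apply] <;> ring

theorem Module.Basis.toDual_apply_eq_dotProduct (x y : L) :
    b.toDual x y = b.equivFun x ⬝ᵥ b.equivFun y := by
  conv_lhs => rw [← b.sum_repr y]
  simp only [map_sum, map_smul, Basis.toDual_apply_left, smul_eq_mul]
  simp [dotProduct, mul_comm]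

variable {b}

theorem Module.Basis.toDual_lie_apply
    (hb : ∀ x y, b.equivFun ⁅x, y⁆ = b.equivFun x ⨯₃ b.equivFun y) (x y z : L) :
    b.toDual ⁅x, y⁆ z = b.toDual x ⁅y, z⁆ := by
  rw [b.toDual_apply_eq_dotProduct, b.toDual_apply_eq_dotProduct, hb, hb, dotProduct_comm,
    triple_product_permutation]

theorem Module.Basis.eq_zero_of_toDual_apply_self_eq_zero (x : L) (hx : b.toDual x x = 0) :
    x = 0 := by
  rw [b.toDual_apply_eq_dotProduct, dotProduct_self_eq_zero] at hx
  exact b.equivFun.map_eq_zero_iff.1 hx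

theorem Module.Basis.center_eq_bot_of_su2_relations
    (h12 : ⁅b 0, b 1⁆ = b 2) (h23 : ⁅b 1, b 2⁆ = b 0) (h31 : ⁅b 2, b 0⁆ = b 1) :
    LieAlgebra.center ℝ L = ⊥ := by
  refine (LieSubmodule.eq_bot_iff _).2 fun z hz => b.toDual_inj z (b.ext fun k => ?_)
  have hz : ∀ x y, b.toDual z ⁅x, y⁆ = 0 := fun x y => by
    rw [← b.toDual_lie_apply (b.equivFun_lie_eq_cross h12 h23 h31), ← lie_skew,
      (LieModule.mem_maxTrivSubmodule ℝ L L z).1 hz, neg_zero, map_zero, LinearMap.zero_apply]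
  fin_cases k
  · simpa [h23] using hz (b 1) (b 2)
  · simpa [h31] using hz (b 2) (b 0)
  · simpa [h12] using hz (b 0) (b 1)

end Su2

/-- The `T*`-extension `T*su(2)` of `su(2)` (the 3-dimensional real Lie algebra with
basis `e₁, e₂, e₃` and brackets `[e₁,e₂] = e₃`, `[e₂,e₃] = e₁`, `[e₃,e₁] = e₂`) has no
Lie subalgebra of dimension 5. -/
theorem tstar_su2_no_five_dim_subalgebra
    {L : Type*} [LieRing L] [LieAlgebra ℝ L]
    (b : Module.Basis (Fin 3) ℝ L)
    (h12 : ⁅b 0, b 1⁆ = b 2) (h23 : ⁅b 1, b 2⁆ = b 0) (h31 : ⁅b 2, b 0⁆ = b 1) :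
    ∀ H : LieSubalgebra ℝ (L × Module.Dual ℝ L), Module.finrank ℝ H ≠ 5 := by
  intro H hH
  have : FiniteDimensional ℝ L := Module.Finite.of_basis b
  have hinv := b.toDual_lie_apply (b.equivFun_lie_eq_cross h12 h23 h31)
  have hB := b.eq_zero_of_toDual_apply_self_eq_zero
  have hZ := b.center_eq_bot_of_su2_relations h12 h23 h31
  have hcodim : finrank ℝ H.toSubmodule + 1 = finrank ℝ (L × Dual ℝ L) := by
    rw [finrank_prod, Subspace.dual_finrank_eq, finrank_eq_card_basis b]
    exact congrArg (· + 1) hH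
  obtain ⟨φ, hφ, hφH⟩ := H.toSubmodule.exists_dual_ne_zero_forall_mem_iff hcodim
  obtain ⟨a, f, haf⟩ := φ.exists_apply_prod_dual_eq
  have hmem : ∀ u α, (u, α) ∈ H ↔ a u + α f = 0 := fun u α => by rw [← haf]; exact hφH _
  have hf : f = 0 := eq_zero_of_forall_lie_mem_span_singleton hinv hB hZ
    (lie_mem_span_singleton_of_tstar_mem_iff hmem)
  have ha : a = 0 := eq_zero_of_forall_map_lie_eq_zero hinv hB hZ a
    fun u v => map_lie_eq_zero_of_tstar_mem_iff hmem hf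
  exact hφ (LinearMap.ext fun ⟨u, α⟩ => by simp [haf, ha, hf])
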